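/- If there exists an (n_1, r_1)-pairs-triples design with 1 ≤ r_1 < n_1 − 1 and an (n_2, r_2)-pairs-triples design with 1 ≤ r_2 < n_2 − 1, then there exists an (n_1·n_2, r_1 + n_1·r_2)-pairs-triples design. -/

import Mathlib

/-- A one-factor on `Fin n`: a perfect matching of the complete graph on `Fin n`,
i.e. a collection of 2-element subsets such that every vertex lies in exactly one
of them. -/
def IsOneFactor (n : ℕ) (T : Set (Finset (Fin n))) : Prop :=
  (∀ p ∈ T, p.card = 2) ∧ ∀ v : Fin n, ∃! p, p ∈ T ∧ v ∈ p

/-- An `(n,r)`-pairs-triples design: `r` pairwise disjoint one-factors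
`T 1, …, T r` on `Fin n` together with a set `R` of triples of `Fin n` such that
every pair of `Fin n` is covered exactly once: either it belongs to exactly one
one-factor and to no triple of `R`, or it belongs to no one-factor and is contained
in exactly one triple of `R`. -/
def IsPairsTriplesDesign (n r : ℕ) (T : Fin r → Set (Finset (Fin n)))
    (R : Set (Finset (Fin n))) : Prop :=
  (∀ i, IsOneFactor n (T i)) ∧
  (∀ i j, i ≠ j → Disjoint (T i) (T j)) ∧
  (∀ b ∈ R, b.card = 3) ∧
  (∀ p : Finset (Fin n), p.card = 2 →
    ((∃! i, p ∈ T i) ∧ ¬∃ b ∈ R, p ⊆ b) ∨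
      ((∀ i, p ∉ T i) ∧ ∃! b, b ∈ R ∧ p ⊆ b))

/-!
Write the points of the product as pairs `(c, a)` with `c` a point of the second design and
`a ∈ ℤ_{n₁}`. Each row `{c} × ℤ_{n₁}` carries a copy of the first design. A pair
`{(c, a), (d, a')}` across two rows is handled by the second design: if `{c, d}` lies in its
one-factor `j`, the pair goes into the one-factor indexed by `(a + a', j)`, which is again a
perfect matching; if `{c, d}` lies in its triple `t`, the pair lies in exactly one transversal
triple over `t` whose `ℤ_{n₁}`-coordinates sum to `0`.
-/

open Function

theorem Function.Injective.existsUnique_iff_of_forall_iff {α β : Type*} {g : α → β}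
    (hg : Injective g) {p : α → Prop} {q : β → Prop}
    (h : ∀ b, q b ↔ ∃ a, p a ∧ g a = b) :
    (∃! b, q b) ↔ ∃! a, p a := by
  constructor
  · rintro ⟨b, hb, hbu⟩
    obtain ⟨a, ha, rfl⟩ := (h b).mp hb
    exact ⟨a, ha, fun a' ha' => hg (hbu _ ((h _).mpr ⟨a', ha', rfl⟩))⟩
  · rintro ⟨a, ha, hau⟩
    refine ⟨g a, (h _).mpr ⟨a, ha, rfl⟩, fun b hb => ?_⟩
    obtain ⟨a', ha', rfl⟩ := (h b).mp hb
    rw [hau a' ha']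

namespace Finset

variable {α β : Type*}

def graphOn (f : α → β) (s : Finset α) : Finset (α × β) :=
  s.map ⟨fun a => (a, f a), fun _ _ h => congrArg Prod.fst h⟩

variable {f g : α → β} {s t : Finset α}

@[simp]
theorem mem_graphOn {x : α × β} : x ∈ s.graphOn f ↔ x.1 ∈ s ∧ f x.1 = x.2 := by
  constructor
  · rintro h
    obtain ⟨a, ha, rfl⟩ := mem_map.mp h
    exact ⟨ha, rfl⟩
  · exact fun h => mem_map.mpr ⟨x.1, h.1, Prod.ext rfl h.2⟩

@[simp]
theorem card_graphOn : (s.graphOn f).card = s.card := card_map _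

theorem graphOn_singleton (a : α) : ({a} : Finset α).graphOn f = {(a, f a)} := rfl

theorem graphOn_subset_graphOn_iff :
    s.graphOn f ⊆ t.graphOn g ↔ s ⊆ t ∧ Set.EqOn f g s := by
  constructor
  · intro h
    have h' : ∀ a ∈ s, a ∈ t ∧ g a = f a := fun a ha =>
      mem_graphOn.mp (h (mem_graphOn (x := (a, f a)) |>.mpr ⟨ha, rfl⟩))
    exact ⟨fun a ha => (h' a ha).1, fun a ha => (h' a ha).2.symm⟩
  · rintro ⟨hst, hfg⟩ x hx
    rw [mem_graphOn] at hx ⊢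
    exact ⟨hst hx.1, (hfg hx.1).symm.trans hx.2⟩

theorem graphOn_congr (h : Set.EqOn f g s) : s.graphOn f = s.graphOn g :=
  (graphOn_subset_graphOn_iff.mpr ⟨subset_rfl, h⟩).antisymm
    (graphOn_subset_graphOn_iff.mpr ⟨subset_rfl, h.symm⟩)

theorem graphOn_injective (f : α → β) : Injective fun s : Finset α => s.graphOn f :=
  fun _ _ h =>
    (graphOn_subset_graphOn_iff.mp h.le).1.antisymm (graphOn_subset_graphOn_iff.mp h.ge).1

theorem singleton_product_subset_iff {b b' : β} {s t : Finset α} (hs : s.Nonempty) :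
    {b} ×ˢ s ⊆ {b'} ×ˢ t ↔ b = b' ∧ s ⊆ t := by
  constructor
  · intro h
    obtain ⟨a, ha⟩ := hs
    have hb : ∀ {x}, x ∈ s → b = b' ∧ x ∈ t := fun {x} hx => by
      simpa [eq_comm, and_comm] using
        h ((mem_product (p := (b, x))).mpr ⟨mem_singleton_self b, hx⟩)
    exact ⟨(hb ha).1, fun x hx => (hb hx).2⟩
  · rintro ⟨rfl, hst⟩
    exact product_subset_product_right hst

theorem singleton_product_injective (b : β) : Injective fun s : Finset α => {b} ×ˢ s := by
  intro s t h
  ext a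
  simpa using congrArg (fun u => (b, a) ∈ u) h

theorem singleton_product_not_subset_graphOn {b : α} {s : Finset β} {t : Finset α}
    (hs : s.Nontrivial) : ¬{b} ×ˢ s ⊆ t.graphOn f := by
  obtain ⟨a, ha, a', ha', hne⟩ := hs
  intro h
  have hf : ∀ a ∈ s, f b = a := fun a ha =>
    (mem_graphOn.mp (h (mem_product.mpr ⟨mem_singleton_self b, ha⟩ : (b, a) ∈ _))).2
  exact hne ((hf a ha).symm.trans (hf a' ha'))

theorem graphOn_not_subset_singleton_product {b : α} {t : Finset β} (hs : s.Nontrivial) :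
    ¬s.graphOn f ⊆ {b} ×ˢ t := by
  obtain ⟨a, ha, a', ha', hne⟩ := hs
  intro h
  have h₁ := mem_product.mp (h (mem_graphOn (x := (a, f a)) |>.mpr ⟨ha, rfl⟩))
  have h₂ := mem_product.mp (h (mem_graphOn (x := (a', f a')) |>.mpr ⟨ha', rfl⟩))
  exact hne ((mem_singleton.mp h₁.1).trans (mem_singleton.mp h₂.1).symm)

theorem exists_singleton_product_or_graphOn_of_card_eq_two [DecidableEq α] [DecidableEq β]
    {p : Finset (α × β)} (hp : p.card = 2) :
    (∃ (a : α) (s : Finset β), s.card = 2 ∧ p = {a} ×ˢ s) ∨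
      ∃ (s : Finset α) (g : α → β), s.card = 2 ∧ p = s.graphOn g := by
  obtain ⟨x, x', hne, rfl⟩ := card_eq_two.mp hp
  by_cases h : x.1 = x'.1
  · refine Or.inl ⟨x.1, {x.2, x'.2}, card_pair fun h₂ => hne (Prod.ext h h₂), ?_⟩
    ext z
    simp only [mem_insert, mem_singleton, mem_product, Prod.ext_iff]
    grind
  · refine Or.inr ⟨{x.1, x'.1}, fun a => if a = x.1 then x.2 else x'.2, card_pair h, ?_⟩
    ext z
    simp only [mem_insert, mem_singleton, mem_graphOn, Prod.ext_iff]
    grind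

end Finset

namespace PairsTriples

open Finset

section design

variable {V W ι κ : Type*}

def CoveredOnce {α β : Type*} (P : α → Prop) (Q : β → Prop) : Prop :=
  ((∃! i, P i) ∧ ¬∃ b, Q b) ∨ ((∀ i, ¬P i) ∧ ∃! b, Q b)

theorem CoveredOnce.of_injective {α α' β β' : Type*} {P : α → Prop} {Q : β → Prop}
    {P' : α' → Prop} {Q' : β' → Prop} {e : α → α'} {g : β → β'} (he : Injective e)
    (hg : Injective g) (hP : ∀ i', P' i' ↔ ∃ i, P i ∧ e i = i')
    (hQ : ∀ b', Q' b' ↔ ∃ b, Q b ∧ g b = b') (h : CoveredOnce P Q) : CoveredOnce P' Q' := by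
  have hP₀ : (∀ i', ¬P' i') ↔ ∀ i, ¬P i := by simp only [hP]; grind
  have hQ₀ : (∃ b', Q' b') ↔ ∃ b, Q b := by simp only [hQ]; grind
  unfold CoveredOnce
  rw [he.existsUnique_iff_of_forall_iff hP, hg.existsUnique_iff_of_forall_iff hQ, hP₀, hQ₀]
  exact h

def IsPerfectMatching (M : Set (Finset V)) : Prop :=
  (∀ p ∈ M, p.card = 2) ∧ ∀ v, ∃! p, p ∈ M ∧ v ∈ p

/-- Disjointness of the one-factors is not a field: it follows from the covering condition
(`IsPTDesign.pairwise_disjoint`). -/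
structure IsPTDesign (T : ι → Set (Finset V)) (R : Set (Finset V)) : Prop where
  isPerfectMatching : ∀ i, IsPerfectMatching (T i)
  card_eq_three : ∀ b ∈ R, b.card = 3
  coveredOnce : ∀ p : Finset V, p.card = 2 →
    CoveredOnce (fun i => p ∈ T i) (fun b => b ∈ R ∧ p ⊆ b)

variable {T : ι → Set (Finset V)} {R : Set (Finset V)}

theorem IsPTDesign.pairwise_disjoint (h : IsPTDesign T R) : Pairwise (Disjoint on T) := by
  intro i j hij
  refine Set.disjoint_left.mpr fun p hpi hpj => ?_
  rcases h.coveredOnce p ((h.isPerfectMatching i).1 p hpi) with ⟨hu, -⟩ | ⟨hnone, -⟩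
  · exact hij (hu.unique hpi hpj)
  · exact hnone i hpi

theorem isPairsTriplesDesign_iff {n r : ℕ} {T : Fin r → Set (Finset (Fin n))}
    {R : Set (Finset (Fin n))} : IsPairsTriplesDesign n r T R ↔ IsPTDesign T R :=
  ⟨fun ⟨hT, _, hR, hcov⟩ => ⟨hT, hR, hcov⟩,
    fun h => ⟨h.isPerfectMatching, fun _ _ hij => h.pairwise_disjoint hij, h.card_eq_three,
      h.coveredOnce⟩⟩

theorem IsPerfectMatching.image {M : Set (Finset V)} (h : IsPerfectMatching M) (e : V ≃ W) :
    IsPerfectMatching (e.finsetCongr '' M) := by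
  refine ⟨?_, fun w => ?_⟩
  · rintro _ ⟨p, hp, rfl⟩
    simpa using h.1 p hp
  refine (e.finsetCongr.injective.existsUnique_iff_of_forall_iff fun b => ?_).mpr
    (h.2 (e.symm w))
  constructor
  · rintro ⟨⟨p, hp, rfl⟩, hw⟩
    exact ⟨p, ⟨hp, by simpa [mem_map_equiv] using hw⟩, rfl⟩
  · rintro ⟨p, ⟨hp, hw⟩, rfl⟩
    exact ⟨⟨p, hp, rfl⟩, by simpa [mem_map_equiv] using hw⟩

theorem IsPTDesign.map (h : IsPTDesign T R) (e : V ≃ W) (σ : ι ≃ κ) :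
    IsPTDesign (fun k => e.finsetCongr '' T (σ.symm k)) (e.finsetCongr '' R) := by
  refine ⟨fun k => (h.isPerfectMatching _).image e, ?_, fun p hp => ?_⟩
  · rintro _ ⟨b, hb, rfl⟩
    simpa using h.card_eq_three b hb
  set E := e.finsetCongr
  refine (h.coveredOnce (E.symm p) (by simpa [E] using hp)).of_injective σ.injective E.injective
    (fun k => ?_) (fun b' => ?_)
  · rw [Set.mem_image_equiv]
    refine ⟨fun hk => ⟨_, hk, σ.apply_symm_apply k⟩, ?_⟩
    rintro ⟨i, hi, rfl⟩
    simpa using hi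
  · constructor
    · rintro ⟨⟨b, hb, rfl⟩, hpb⟩
      exact ⟨b, ⟨hb, subset_map_symm.mp hpb⟩, rfl⟩
    · rintro ⟨b, ⟨hb, hpb⟩, rfl⟩
      exact ⟨⟨b, hb, rfl⟩, subset_map_symm.mpr hpb⟩

end design

variable {β G : Type*}

def rowLift (A : Set (Finset G)) : Set (Finset (β × G)) :=
  {b | ∃ y, ∃ t ∈ A, {y} ×ˢ t = b}

def graphLift [AddCommMonoid G] (B : Set (Finset β)) (k : G) : Set (Finset (β × G)) :=
  {b | ∃ t ∈ B, ∃ f : β → G, ∑ c ∈ t, f c = k ∧ t.graphOn f = b}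

section sumCompletion

variable [DecidableEq β] [AddCommGroup G] {s t : Finset β} {f g : β → G} {k : G}

/-- The value off `s` makes the sum of `g` over `s` and one further point equal to `k`. -/
def sumCompletion (s : Finset β) (g : β → G) (k : G) (c : β) : G :=
  if c ∈ s then g c else k - ∑ x ∈ s, g x

theorem sumCompletion_of_mem {c : β} (hc : c ∈ s) : sumCompletion s g k c = g c := if_pos hc

theorem sum_sumCompletion (hst : s ⊆ t) (h : (t \ s).card = 1) :
    ∑ c ∈ t, sumCompletion s g k c = k := by
  obtain ⟨e, he⟩ := card_eq_one.mp h
  have he' : e ∉ s := fun hes => by simpa [hes] using he.ge (mem_singleton_self e)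
  rw [← sum_sdiff hst, he, sum_singleton, sum_congr rfl fun c hc => sumCompletion_of_mem hc]
  simp [sumCompletion, he']

theorem eqOn_sumCompletion (hst : s ⊆ t) (h : (t \ s).card = 1) (hf : ∑ c ∈ t, f c = k)
    (hfg : Set.EqOn f g s) : Set.EqOn f (sumCompletion s g k) t := by
  intro x hx
  by_cases hxs : x ∈ s
  · simp [sumCompletion, hxs, hfg hxs]
  obtain ⟨e, he⟩ := card_eq_one.mp h
  have hxe : x = e := mem_singleton.mp (he ▸ mem_sdiff.mpr ⟨hx, hxs⟩)
  rw [← sum_sdiff hst, he, sum_singleton, sum_congr rfl fun c hc => hfg hc, ← hxe] at hf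
  simp [sumCompletion, hxs, ← hf]

end sumCompletion

section lifts

variable {A : Set (Finset G)} {s : Finset G} {b : Finset (β × G)} {y : β}

theorem singleton_product_mem_rowLift_iff (hs : s.Nonempty) :
    {y} ×ˢ s ∈ rowLift A ↔ s ∈ A := by
  refine ⟨fun ⟨y', t, ht, heq⟩ => ?_, fun hs => ⟨y, s, hs, rfl⟩⟩
  obtain ⟨rfl, -⟩ := (singleton_product_subset_iff hs).mp heq.ge
  rwa [← singleton_product_injective y heq]

theorem rowLift_and_subset_iff (hs : s.Nonempty) :
    b ∈ rowLift A ∧ {y} ×ˢ s ⊆ b ↔ ∃ t, (t ∈ A ∧ s ⊆ t) ∧ {y} ×ˢ t = b := by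
  constructor
  · rintro ⟨⟨y', t, ht, rfl⟩, hsub⟩
    obtain ⟨rfl, hst⟩ := (singleton_product_subset_iff hs).mp hsub
    exact ⟨t, ⟨ht, hst⟩, rfl⟩
  · rintro ⟨t, ⟨ht, hst⟩, rfl⟩
    exact ⟨⟨y, t, ht, rfl⟩, product_subset_product_right hst⟩

theorem graphOn_mem_graphLift_iff [AddCommMonoid G] {B : Set (Finset β)} {s : Finset β}
    {g : β → G} {k : G} :
    s.graphOn g ∈ graphLift B k ↔ s ∈ B ∧ ∑ c ∈ s, g c = k := by
  refine ⟨fun ⟨t, ht, f, hf, heq⟩ => ?_, fun ⟨hs, hg⟩ => ⟨s, hs, g, hg, rfl⟩⟩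
  obtain ⟨hts, hfg⟩ := graphOn_subset_graphOn_iff.mp heq.le
  obtain rfl := hts.antisymm (graphOn_subset_graphOn_iff.mp heq.ge).1
  exact ⟨ht, (sum_congr rfl hfg).symm.trans hf⟩

theorem graphLift_and_subset_iff [DecidableEq β] [AddCommGroup G] {B : Set (Finset β)}
    {s : Finset β} {g : β → G} {k : G} (hB : ∀ t ∈ B, s ⊆ t → (t \ s).card = 1) :
    b ∈ graphLift B k ∧ s.graphOn g ⊆ b ↔
      ∃ t, (t ∈ B ∧ s ⊆ t) ∧ t.graphOn (sumCompletion s g k) = b := by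
  constructor
  · rintro ⟨⟨t, ht, f, hf, rfl⟩, hsub⟩
    obtain ⟨hst, hgf⟩ := graphOn_subset_graphOn_iff.mp hsub
    exact ⟨t, ⟨ht, hst⟩,
      (graphOn_congr (eqOn_sumCompletion hst (hB t ht hst) hf hgf.symm)).symm⟩
  · rintro ⟨t, ⟨ht, hst⟩, rfl⟩
    refine ⟨⟨t, ht, _, sum_sumCompletion hst (hB t ht hst), rfl⟩, ?_⟩
    exact graphOn_subset_graphOn_iff.mpr ⟨hst, fun c hc => (sumCompletion_of_mem hc).symm⟩

theorem singleton_product_not_subset_of_mem_graphLift [AddCommMonoid G] {B : Set (Finset β)}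
    {k : G} (hs : s.Nontrivial) (hb : b ∈ graphLift B k) : ¬{y} ×ˢ s ⊆ b := by
  obtain ⟨t, -, f, -, rfl⟩ := hb
  exact singleton_product_not_subset_graphOn hs

theorem graphOn_not_subset_of_mem_rowLift {s : Finset β} {g : β → G} (hs : s.Nontrivial)
    (hb : b ∈ rowLift A) : ¬s.graphOn g ⊆ b := by
  obtain ⟨y, t, -, rfl⟩ := hb
  exact graphOn_not_subset_singleton_product hs

theorem IsPerfectMatching.rowLift {M : Set (Finset G)} (h : IsPerfectMatching M) :
    IsPerfectMatching (rowLift (β := β) M) := by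
  refine ⟨?_, fun x => ?_⟩
  · rintro _ ⟨y, t, ht, rfl⟩
    simp [h.1 t ht]
  have hx : ∀ b : Finset (β × G), x ∈ b ↔ {x.1} ×ˢ ({x.2} : Finset G) ⊆ b := by
    simp
  refine ((singleton_product_injective x.1).existsUnique_iff_of_forall_iff fun b => ?_).mpr
    (h.2 x.2)
  rw [hx, rowLift_and_subset_iff (singleton_nonempty x.2)]
  simp only [singleton_subset_iff]

theorem IsPerfectMatching.graphLift [DecidableEq β] [AddCommGroup G] {M : Set (Finset β)}
    (h : IsPerfectMatching M) (k : G) : IsPerfectMatching (graphLift M k) := by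
  refine ⟨?_, fun x => ?_⟩
  · rintro _ ⟨t, ht, f, -, rfl⟩
    simp [h.1 t ht]
  have hx : ∀ b : Finset (β × G), x ∈ b ↔ graphOn (fun _ => x.2) {x.1} ⊆ b := by
    simp [graphOn_singleton]
  have hM : ∀ t ∈ M, {x.1} ⊆ t → (t \ {x.1}).card = 1 := fun t ht hxt => by
    rw [card_sdiff_of_subset hxt, h.1 t ht, card_singleton]
  have hinj := graphOn_injective (sumCompletion {x.1} (fun _ => x.2) k)
  refine (hinj.existsUnique_iff_of_forall_iff fun b => ?_).mpr (h.2 x.1)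
  rw [hx, graphLift_and_subset_iff hM]
  simp only [singleton_subset_iff]

end lifts

section product

variable {ι₁ ι₂ : Type*} [AddCommGroup G]
  {T₁ : ι₁ → Set (Finset G)} {R₁ : Set (Finset G)} {T₂ : ι₂ → Set (Finset β)}
  {R₂ : Set (Finset β)}

def prodFactors (T₁ : ι₁ → Set (Finset G)) (T₂ : ι₂ → Set (Finset β)) :
    ι₁ ⊕ G × ι₂ → Set (Finset (β × G)) :=
  Sum.elim (fun i => rowLift (T₁ i)) fun kj => graphLift (T₂ kj.2) kj.1

def prodTriples (R₁ : Set (Finset G)) (R₂ : Set (Finset β)) : Set (Finset (β × G)) :=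
  rowLift R₁ ∪ graphLift R₂ 0

theorem coveredOnce_singleton_product (h₁ : IsPTDesign T₁ R₁) (y : β) {s : Finset G}
    (hs : s.card = 2) :
    CoveredOnce (fun i => {y} ×ˢ s ∈ prodFactors T₁ T₂ i)
      (fun b => b ∈ prodTriples R₁ R₂ ∧ {y} ×ˢ s ⊆ b) := by
  have hne : s.Nonempty := card_pos.mp (by omega)
  have hnt : s.Nontrivial := one_lt_card_iff_nontrivial.mp (by omega)
  refine (h₁.coveredOnce s hs).of_injective Sum.inl_injective (singleton_product_injective y)
    (fun i => ?_) (fun b => ?_)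
  · rcases i with i | ⟨k, j⟩
    · exact (singleton_product_mem_rowLift_iff hne).trans (by simp)
    · exact iff_of_false (fun hp => singleton_product_not_subset_of_mem_graphLift hnt hp le_rfl)
        (by simp)
  · rw [← rowLift_and_subset_iff hne]
    constructor
    · rintro ⟨hb | hb, hsub⟩
      · exact ⟨hb, hsub⟩
      · exact absurd hsub (singleton_product_not_subset_of_mem_graphLift hnt hb)
    · exact fun ⟨hb, hsub⟩ => ⟨Or.inl hb, hsub⟩

theorem coveredOnce_graphOn [DecidableEq β] (h₂ : IsPTDesign T₂ R₂) {s : Finset β}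
    (hs : s.card = 2) (g : β → G) :
    CoveredOnce (fun i => s.graphOn g ∈ prodFactors T₁ T₂ i)
      (fun b => b ∈ prodTriples R₁ R₂ ∧ s.graphOn g ⊆ b) := by
  have hnt : s.Nontrivial := one_lt_card_iff_nontrivial.mp (by omega)
  have hR₂ : ∀ t ∈ R₂, s ⊆ t → (t \ s).card = 1 := fun t ht hst => by
    rw [card_sdiff_of_subset hst, h₂.card_eq_three t ht, hs]
  refine (h₂.coveredOnce s hs).of_injective (e := fun j => Sum.inr (∑ c ∈ s, g c, j))
    (fun j j' h => by simpa using h) (graphOn_injective (sumCompletion s g 0))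
    (fun i => ?_) (fun b => ?_)
  · rcases i with i | ⟨k, j⟩
    · exact iff_of_false (fun hp => graphOn_not_subset_of_mem_rowLift hnt hp le_rfl) (by simp)
    · simp [prodFactors, graphOn_mem_graphLift_iff, and_comm, eq_comm]
  · rw [← graphLift_and_subset_iff hR₂]
    constructor
    · rintro ⟨hb | hb, hsub⟩
      · exact absurd hsub (graphOn_not_subset_of_mem_rowLift hnt hb)
      · exact ⟨hb, hsub⟩
    · exact fun ⟨hb, hsub⟩ => ⟨Or.inr hb, hsub⟩

theorem IsPTDesign.prod [DecidableEq β] [DecidableEq G] (h₁ : IsPTDesign T₁ R₁)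
    (h₂ : IsPTDesign T₂ R₂) : IsPTDesign (prodFactors T₁ T₂) (prodTriples R₁ R₂) where
  isPerfectMatching
    | .inl i => (h₁.isPerfectMatching i).rowLift
    | .inr (k, j) => (h₂.isPerfectMatching j).graphLift k
  card_eq_three := by
    rintro b (⟨y, t, ht, rfl⟩ | ⟨t, ht, f, -, rfl⟩)
    · simp [h₁.card_eq_three t ht]
    · simp [h₂.card_eq_three t ht]
  coveredOnce p hp := by
    obtain ⟨y, s, hs, rfl⟩ | ⟨s, g, hs, rfl⟩ :=
      exists_singleton_product_or_graphOn_of_card_eq_two hp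
    · exact coveredOnce_singleton_product h₁ y hs
    · exact coveredOnce_graphOn h₂ hs g

end product

end PairsTriples

open PairsTriples in
theorem stmt19_general {n₁ r₁ n₂ r₂ : ℕ} (hr₁' : r₁ < n₁ - 1)
    (h₁ : ∃ (T : Fin r₁ → Set (Finset (Fin n₁))) (R : Set (Finset (Fin n₁))),
        IsPairsTriplesDesign n₁ r₁ T R)
    (h₂ : ∃ (T : Fin r₂ → Set (Finset (Fin n₂))) (R : Set (Finset (Fin n₂))),
        IsPairsTriplesDesign n₂ r₂ T R) :
    ∃ (T' : Fin (r₁ + n₁ * r₂) → Set (Finset (Fin (n₁ * n₂))))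
      (R' : Set (Finset (Fin (n₁ * n₂)))),
      IsPairsTriplesDesign (n₁ * n₂) (r₁ + n₁ * r₂) T' R' := by
  obtain ⟨T₁, R₁, h₁⟩ := h₁
  obtain ⟨T₂, R₂, h₂⟩ := h₂
  have : NeZero n₁ := ⟨by omega⟩
  have h := (isPairsTriplesDesign_iff.mp h₁).prod (isPairsTriplesDesign_iff.mp h₂)
  exact ⟨_, _, isPairsTriplesDesign_iff.mpr <| h.map
    ((Equiv.prodComm _ _).trans finProdFinEquiv)
    ((Equiv.sumCongr (Equiv.refl _) finProdFinEquiv).trans finSumFinEquiv)⟩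

theorem stmt19 {n₁ r₁ n₂ r₂ : ℕ} (hr₁ : 1 ≤ r₁) (hr₁' : r₁ < n₁ - 1)
    (hr₂ : 1 ≤ r₂) (hr₂' : r₂ < n₂ - 1)
    (h₁ : ∃ (T : Fin r₁ → Set (Finset (Fin n₁))) (R : Set (Finset (Fin n₁))),
        IsPairsTriplesDesign n₁ r₁ T R)
    (h₂ : ∃ (T : Fin r₂ → Set (Finset (Fin n₂))) (R : Set (Finset (Fin n₂))),
        IsPairsTriplesDesign n₂ r₂ T R) :
    ∃ (T' : Fin (r₁ + n₁ * r₂) → Set (Finset (Fin (n₁ * n₂))))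
      (R' : Set (Finset (Fin (n₁ * n₂)))),
      IsPairsTriplesDesign (n₁ * n₂) (r₁ + n₁ * r₂) T' R' :=
  stmt19_general hr₁' h₁ h₂
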